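/- arXiv:2504.12948 — 7 statements merged into one kernel-verified Lean document; each statement's English description precedes it below -/
import Mathlib

section
/- If B = [a b] is a reduced basis (i.e., a1*a2*b1*b2 ≤ 0 and (|a1|-|a2|)(|b1|-|b2|) ≤ 0), then the first successive minimum of the lattice L(B) under the ℓ∞ norm equals min(‖a‖∞, ‖b‖∞). -/
lemma aux_zmul (z : ℤ) (hz : z ≠ 0) (a : ℝ) : |a| ≤ |(z:ℝ) * a| := by
  rw [abs_mul]
  have h1 : (1:ℝ) ≤ |(z:ℝ)| := by
    have := Int.one_le_abs hz
    exact_mod_cast this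
  nlinarith [abs_nonneg a]

lemma aux_add (x y : ℝ) (h : 0 ≤ x * y) : |x| ≤ |x + y| := by
  nlinarith [abs_nonneg x, abs_nonneg (x + y), sq_abs x, sq_abs (x + y), sq_nonneg y]

/-- If `B = [a b]` is a reduced basis (`a1*a2*b1*b2 ≤ 0` and
`(|a1|-|a2|)*(|b1|-|b2|) ≤ 0`) of the lattice generated by the linearly
independent vectors `a = (a1,a2)` and `b = (b1,b2)`, then the first successive
minimum under the ℓ∞ norm equals `min ‖a‖∞ ‖b‖∞`. -/
theorem stmt0 (a1 a2 b1 b2 : ℝ)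
    (hind : a1 * b2 - a2 * b1 ≠ 0)
    (hred1 : a1 * a2 * b1 * b2 ≤ 0)
    (hred2 : (|a1| - |a2|) * (|b1| - |b2|) ≤ 0) :
    IsLeast {r : ℝ | ∃ z1 z2 : ℤ, ¬(z1 = 0 ∧ z2 = 0) ∧
        r = max |(z1 : ℝ) * a1 + (z2 : ℝ) * b1| |(z1 : ℝ) * a2 + (z2 : ℝ) * b2|}
      (min (max |a1| |a2|) (max |b1| |b2|)) := by
  constructor
  · rcases le_total (max |a1| |a2|) (max |b1| |b2|) with h | h
    · refine ⟨1, 0, by simp, ?_⟩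
      rw [min_eq_left h]; push_cast; norm_num
    · refine ⟨0, 1, by simp, ?_⟩
      rw [min_eq_right h]; push_cast; norm_num
  · rintro r ⟨z1, z2, hz, rfl⟩
    by_cases h1 : z1 = 0
    · have h2 : z2 ≠ 0 := fun h2 => hz ⟨h1, h2⟩
      subst h1
      have e1 : |b1| ≤ |(0:ℤ) * a1 + (z2:ℝ) * b1| := by
        simpa using aux_zmul z2 h2 b1
      have e2 : |b2| ≤ |(0:ℤ) * a2 + (z2:ℝ) * b2| := by
        simpa using aux_zmul z2 h2 b2
      calc min (max |a1| |a2|) (max |b1| |b2|) ≤ max |b1| |b2| := min_le_right _ _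
        _ ≤ _ := max_le_max e1 e2
    · by_cases h2 : z2 = 0
      · subst h2
        have e1 : |a1| ≤ |(z1:ℝ) * a1 + (0:ℤ) * b1| := by
          simpa using aux_zmul z1 h1 a1
        have e2 : |a2| ≤ |(z1:ℝ) * a2 + (0:ℤ) * b2| := by
          simpa using aux_zmul z1 h1 a2
        calc min (max |a1| |a2|) (max |b1| |b2|) ≤ max |a1| |a2| := min_le_left _ _
          _ ≤ _ := max_le_max e1 e2
      · -- both nonzero
        have hp : ((z1:ℝ) * a1 * ((z2:ℝ) * b1)) * ((z1:ℝ) * a2 * ((z2:ℝ) * b2)) ≤ 0 := by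
          nlinarith [sq_nonneg ((z1:ℝ) * (z2:ℝ)), hred1]
        rcases le_or_gt 0 ((z1:ℝ) * a1 * ((z2:ℝ) * b1)) with hc | hc
        · -- coordinate 1 constructive
          have hA : |a1| ≤ |(z1:ℝ) * a1 + (z2:ℝ) * b1| :=
            le_trans (aux_zmul z1 h1 a1) (aux_add _ _ hc)
          have hB : |b1| ≤ |(z1:ℝ) * a1 + (z2:ℝ) * b1| := by
            have := aux_add ((z2:ℝ) * b1) ((z1:ℝ) * a1) (by nlinarith)
            rw [add_comm] at this
            exact le_trans (aux_zmul z2 h2 b1) this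
          rcases le_total |a1| |a2| with hc2 | hc2
          · rcases eq_or_lt_of_le hc2 with heq | hlt
            · have : min (max |a1| |a2|) (max |b1| |b2|) ≤ |a1| := by
                rw [← heq] at *
                simp [min_le_iff, le_max_iff]
              exact le_trans (le_trans this hA) (le_max_left _ _)
            · have hb : |b2| ≤ |b1| := by nlinarith
              have : min (max |a1| |a2|) (max |b1| |b2|) ≤ |b1| := by
                have : max |b1| |b2| = |b1| := max_eq_left hb
                rw [this] at *
                exact min_le_right _ _
              exact le_trans (le_trans this hB) (le_max_left _ _)
          · have : min (max |a1| |a2|) (max |b1| |b2|) ≤ |a1| := by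
              have : max |a1| |a2| = |a1| := max_eq_left hc2
              rw [this] at *
              exact min_le_left _ _
            exact le_trans (le_trans this hA) (le_max_left _ _)
        · -- coordinate 2 constructive
          have hc' : 0 ≤ (z1:ℝ) * a2 * ((z2:ℝ) * b2) := by nlinarith
          have hA : |a2| ≤ |(z1:ℝ) * a2 + (z2:ℝ) * b2| :=
            le_trans (aux_zmul z1 h1 a2) (aux_add _ _ hc')
          have hB : |b2| ≤ |(z1:ℝ) * a2 + (z2:ℝ) * b2| := by
            have := aux_add ((z2:ℝ) * b2) ((z1:ℝ) * a2) (by nlinarith)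
            rw [add_comm] at this
            exact le_trans (aux_zmul z2 h2 b2) this
          rcases le_total |a2| |a1| with hc2 | hc2
          · rcases eq_or_lt_of_le hc2 with heq | hlt
            · have : min (max |a1| |a2|) (max |b1| |b2|) ≤ |a2| := by
                rw [heq] at *
                simp [min_le_iff, le_max_iff]
              exact le_trans (le_trans this hA) (le_max_right _ _)
            · have hb : |b1| ≤ |b2| := by nlinarith
              have : min (max |a1| |a2|) (max |b1| |b2|) ≤ |b2| := by
                have : max |b1| |b2| = |b2| := max_eq_right hb
                rw [this] at *
                exact min_le_right _ _
              exact le_trans (le_trans this hB) (le_max_right _ _)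
          · have : min (max |a1| |a2|) (max |b1| |b2|) ≤ |a2| := by
              have : max |a1| |a2| = |a2| := max_eq_right hc2
              rw [this] at *
              exact min_le_left _ _
            exact le_trans (le_trans this hA) (le_max_right _ _)
end

section
/- The condition (|a1|-|a2|)(|b1|-|b2|) ≤ 0 is equivalent to |a1*b1 - a2*b2| ≤ |a1*b2 - a2*b1| for real numbers a1, a2, b1, b2 with a1*a2*b1*b2 ≤ 0. -/
/-- For real numbers `a1, a2, b1, b2` with `a1*a2*b1*b2 ≤ 0`, the condition
`(|a1|-|a2|)*(|b1|-|b2|) ≤ 0` is equivalent to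
`|a1*b1 - a2*b2| ≤ |a1*b2 - a2*b1|`. -/
theorem stmt1 (a1 a2 b1 b2 : ℝ) (h : a1 * a2 * b1 * b2 ≤ 0) :
    (|a1| - |a2|) * (|b1| - |b2|) ≤ 0 ↔
      |a1 * b1 - a2 * b2| ≤ |a1 * b2 - a2 * b1| := by
  rw [← sq_le_sq]
  have h1 := abs_nonneg a1
  have h2 := abs_nonneg a2
  have h3 := abs_nonneg b1
  have h4 := abs_nonneg b2
  have e1 := sq_abs a1
  have e2 := sq_abs a2
  have e3 := sq_abs b1
  have e4 := sq_abs b2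
  constructor
  · intro hh
    nlinarith [mul_nonneg (add_nonneg h1 h2) (add_nonneg h3 h4),
      mul_nonpos_iff.mp hh]
  · intro hh
    nlinarith [mul_nonneg h1 h3, mul_nonneg h2 h4, mul_nonneg h1 h4, mul_nonneg h2 h3,
      sq_nonneg (|a1| - |a2|), sq_nonneg (|b1| - |b2|),
      sq_nonneg (|a1| + |a2|), sq_nonneg (|b1| + |b2|)]
end

section
/- For any two vectors x, y in a normed space and any real α > 1, if ‖x‖ ≤ ‖x + y‖ then ‖x + y‖ ≤ ‖x + α·y‖. -/
/-- For any two vectors `x, y` in a real normed space and any real `α > 1`,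
if `‖x‖ ≤ ‖x + y‖` then `‖x + y‖ ≤ ‖x + α • y‖`. -/
theorem stmt2 {E : Type*} [NormedAddCommGroup E] [NormedSpace ℝ E]
    (x y : E) (α : ℝ) (hα : 1 < α) (h : ‖x‖ ≤ ‖x + y‖) :
    ‖x + y‖ ≤ ‖x + α • y‖ := by
  have hα0 : (0:ℝ) < α := lt_trans one_pos hα
  have hkey : x + y = (1/α) • (x + α • y) + (1 - 1/α) • x := by
    rw [smul_add, smul_smul, one_div_mul_cancel hα0.ne', one_smul, sub_smul, one_smul]
    abel
  have h1 : ‖x + y‖ ≤ (1/α) * ‖x + α • y‖ + (1 - 1/α) * ‖x‖ := by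
    calc ‖x + y‖ = ‖(1/α) • (x + α • y) + (1 - 1/α) • x‖ := by rw [← hkey]
    _ ≤ ‖(1/α) • (x + α • y)‖ + ‖(1 - 1/α) • x‖ := norm_add_le _ _
    _ = (1/α) * ‖x + α • y‖ + (1 - 1/α) * ‖x‖ := by
        rw [norm_smul, norm_smul, Real.norm_eq_abs, Real.norm_eq_abs,
          abs_of_pos (by positivity), abs_of_nonneg (by
            rw [sub_nonneg]; exact (div_le_one hα0).mpr hα.le)]
  have h2 : ‖x + y‖ ≤ (1/α) * ‖x + α • y‖ + (1 - 1/α) * ‖x + y‖ := by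
    refine h1.trans (by nlinarith [norm_nonneg (x+y), (div_le_one hα0).mpr hα.le])
  have h3 : (1/α) * ‖x + y‖ ≤ (1/α) * ‖x + α • y‖ := by linarith
  exact le_of_mul_le_mul_left (by linarith) (by positivity : (0:ℝ) < 1/α)
end

section
/- Let B = [a b] be a reduced basis of a lattice L in ℝ² (a1*a2*b1*b2 ≤ 0 and (|a1|-|a2|)(|b1|-|b2|) ≤ 0). Then min(‖a‖₂, ‖b‖₂, ‖a+b‖₂, ‖a-b‖₂) equals the first successive minimum of L under the ℓ₂ norm. -/
-- core normalized lemma, positive sign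
lemma key0p (a1 a2 b1 b2 u v : ℝ) (ha2 : 0 ≤ a2) (h12 : a2 ≤ a1)
    (hb1 : b1 ≤ 0) (hb2 : 0 ≤ b2) (hbb : -b1 ≤ b2) (hv : 1 ≤ v) (hu : v + 1 ≤ u) :
    min (a1 ^ 2 + a2 ^ 2) (b1 ^ 2 + b2 ^ 2)
      ≤ (u * a1 + v * b1) ^ 2 + (u * a2 + v * b2) ^ 2 := by
  rcases le_or_gt a1 (u * a1 + v * b1) with h1 | h1
  · refine le_trans (min_le_left _ _) ?_
    have hs : a2 ≤ u * a2 + v * b2 := by nlinarith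
    nlinarith
  · rcases le_or_gt (u * a1 + v * b1) b1 with h2 | h2
    · refine le_trans (min_le_right _ _) ?_
      have hs : b2 ≤ u * a2 + v * b2 := by nlinarith
      nlinarith
    · refine le_trans (min_le_left _ _) ?_
      have h3 : (u - 1) * a1 < v * (-b1) := by nlinarith
      have h4 : a1 + a2 ≤ u * a2 + v * b2 := by nlinarith
      nlinarith

-- core normalized lemma, negative sign
lemma key0n (a1 a2 b1 b2 u v : ℝ) (ha2 : 0 ≤ a2) (h12 : a2 ≤ a1)
    (hb1 : b1 ≤ 0) (hb2 : 0 ≤ b2) (hbb : -b1 ≤ b2) (hv : 1 ≤ v) (hu : v + 1 ≤ u) :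
    min (a1 ^ 2 + a2 ^ 2) (b1 ^ 2 + b2 ^ 2)
      ≤ (u * a1 - v * b1) ^ 2 + (u * a2 - v * b2) ^ 2 := by
  refine le_trans (min_le_left _ _) ?_
  have h4 : a1 + a2 ≤ u * a1 - v * b1 := by nlinarith
  nlinarith

-- sign freedom in u, v
lemma key0star (a1 a2 b1 b2 u v : ℝ) (ha2 : 0 ≤ a2) (h12 : a2 ≤ a1)
    (hb1 : b1 ≤ 0) (hb2 : 0 ≤ b2) (hbb : -b1 ≤ b2) (hv : 1 ≤ |v|) (hu : |v| + 1 ≤ |u|) :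
    min (a1 ^ 2 + a2 ^ 2) (b1 ^ 2 + b2 ^ 2)
      ≤ (u * a1 + v * b1) ^ 2 + (u * a2 + v * b2) ^ 2 := by
  rcases le_or_gt 0 u with hu0 | hu0 <;> rcases le_or_gt 0 v with hv0 | hv0
  · rw [abs_of_nonneg hu0, abs_of_nonneg hv0] at *
    exact key0p a1 a2 b1 b2 u v ha2 h12 hb1 hb2 hbb hv hu
  · rw [abs_of_nonneg hu0, abs_of_neg hv0] at *
    have h := key0n a1 a2 b1 b2 u (-v) ha2 h12 hb1 hb2 hbb hv hu
    convert h using 2 <;> ring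
  · rw [abs_of_neg hu0, abs_of_nonneg hv0] at *
    have h := key0n a1 a2 b1 b2 (-u) v ha2 h12 hb1 hb2 hbb hv hu
    convert h using 2 <;> ring
  · rw [abs_of_neg hu0, abs_of_neg hv0] at *
    have h := key0p a1 a2 b1 b2 (-u) (-v) ha2 h12 hb1 hb2 hbb hv hu
    convert h using 2 <;> ring

-- partially normalized: a1 ≥ 0, b2 ≥ 0, dominance
lemma key1a (a1 a2 b1 b2 u v : ℝ) (ha1 : 0 ≤ a1) (hb2 : 0 ≤ b2)
    (hA : |a2| ≤ a1) (hB : |b1| ≤ b2) (hred1 : a1 * a2 * b1 * b2 ≤ 0)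
    (hv : 1 ≤ |v|) (hu : |v| + 1 ≤ |u|) :
    min (a1 ^ 2 + a2 ^ 2) (b1 ^ 2 + b2 ^ 2)
      ≤ (u * a1 + v * b1) ^ 2 + (u * a2 + v * b2) ^ 2 := by
  have hA' := abs_le.mp hA
  have hB' := abs_le.mp hB
  have hvv : 1 ≤ |(-v)| := by rwa [abs_neg]
  have huu : |(-v)| + 1 ≤ |u| := by rwa [abs_neg]
  rcases le_or_gt 0 a2 with h2 | h2 <;> rcases le_or_gt b1 0 with h1 | h1
  · exact key0star a1 a2 b1 b2 u v h2 hA'.2 h1 hb2 (by linarith) hv hu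
  · -- 0 ≤ a2, 0 < b1 : then a2 = 0
    have h2' : a2 ≤ 0 := by
      by_contra hc
      push_neg at hc
      have : 0 < a1 * a2 * b1 * b2 :=
        mul_pos (mul_pos (mul_pos (lt_of_lt_of_le hc hA'.2) hc) h1)
          (lt_of_lt_of_le h1 hB'.2)
      linarith
    have h := key0star a1 (-a2) (-b1) b2 u (-v) (by linarith) (by linarith)
      (by linarith) hb2 (by linarith) hvv huu
    convert h using 2 <;> ring
  · -- a2 < 0, b1 ≤ 0 : then b1 = 0
    have h1' : 0 ≤ b1 := by
      by_contra hc
      push_neg at hc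
      have ha1p : 0 < a1 := by linarith [hA'.1]
      have p1 : a1 * a2 < 0 := mul_neg_of_pos_of_neg ha1p h2
      have p2 : 0 < a1 * a2 * b1 := mul_pos_of_neg_of_neg p1 hc
      have p3 : 0 < a1 * a2 * b1 * b2 := mul_pos p2 (by linarith [hB'.1])
      linarith
    have h := key0star a1 (-a2) (-b1) b2 u (-v) (by linarith) (by linarith)
      (by linarith) hb2 (by linarith) hvv huu
    convert h using 2 <;> ring
  · have h := key0star a1 (-a2) (-b1) b2 u (-v) (by linarith) (by linarith)
      (by linarith) hb2 (by linarith) hvv huu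
    convert h using 2 <;> ring

-- dominance pattern fixed, arbitrary signs
lemma key1 (a1 a2 b1 b2 u v : ℝ) (hA : |a2| ≤ |a1|) (hB : |b1| ≤ |b2|)
    (hred1 : a1 * a2 * b1 * b2 ≤ 0) (hv : 1 ≤ |v|) (hu : |v| + 1 ≤ |u|) :
    min (a1 ^ 2 + a2 ^ 2) (b1 ^ 2 + b2 ^ 2)
      ≤ (u * a1 + v * b1) ^ 2 + (u * a2 + v * b2) ^ 2 := by
  have hvv : 1 ≤ |(-v)| := by rwa [abs_neg]
  have huu1 : |v| + 1 ≤ |(-u)| := by rwa [abs_neg]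
  have huu2 : |(-v)| + 1 ≤ |(-u)| := by rw [abs_neg, abs_neg]; exact hu
  rcases le_or_gt 0 a1 with h1 | h1 <;> rcases le_or_gt 0 b2 with h2 | h2
  · have h := key1a a1 a2 b1 b2 u v h1 h2 (by rwa [abs_of_nonneg h1] at hA)
      (by rwa [abs_of_nonneg h2] at hB) hred1 hv hu
    convert h using 2 <;> ring
  · have h := key1a a1 a2 (-b1) (-b2) u (-v) h1 (by linarith)
      (by rwa [abs_of_nonneg h1] at hA)
      (by rw [abs_neg]; rwa [abs_of_neg h2] at hB)
      (by linear_combination hred1) hvv (by rwa [abs_neg])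
    convert h using 2 <;> ring
  · have h := key1a (-a1) (-a2) b1 b2 (-u) v (by linarith) h2
      (by rw [abs_neg]; rwa [abs_of_neg h1] at hA)
      (by rwa [abs_of_nonneg h2] at hB)
      (by linear_combination hred1) hv huu1
    convert h using 2 <;> ring
  · have h := key1a (-a1) (-a2) (-b1) (-b2) (-u) (-v) (by linarith) (by linarith)
      (by rw [abs_neg]; rwa [abs_of_neg h1] at hA)
      (by rw [abs_neg]; rwa [abs_of_neg h2] at hB)
      (by linear_combination hred1) hvv huu2
    convert h using 2 <;> ring

-- full reduced hypotheses
lemma key2 (a1 a2 b1 b2 u v : ℝ) (hred1 : a1 * a2 * b1 * b2 ≤ 0)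
    (hred2 : (|a1| - |a2|) * (|b1| - |b2|) ≤ 0) (hv : 1 ≤ |v|) (hu : |v| + 1 ≤ |u|) :
    min (a1 ^ 2 + a2 ^ 2) (b1 ^ 2 + b2 ^ 2)
      ≤ (u * a1 + v * b1) ^ 2 + (u * a2 + v * b2) ^ 2 := by
  rcases mul_nonpos_iff.mp hred2 with ⟨hx, hy⟩ | ⟨hx, hy⟩
  · exact key1 a1 a2 b1 b2 u v (by linarith) (by linarith) hred1 hv hu
  · have h := key1 a2 a1 b2 b1 u v (by linarith) (by linarith)
      (by linear_combination hred1) hv hu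
    have e1 : min (a1 ^ 2 + a2 ^ 2) (b1 ^ 2 + b2 ^ 2)
        = min (a2 ^ 2 + a1 ^ 2) (b2 ^ 2 + b1 ^ 2) := by congr 1 <;> ring
    rw [e1]
    calc min (a2 ^ 2 + a1 ^ 2) (b2 ^ 2 + b1 ^ 2)
        ≤ (u * a2 + v * b2) ^ 2 + (u * a1 + v * b1) ^ 2 := h
      _ = (u * a1 + v * b1) ^ 2 + (u * a2 + v * b2) ^ 2 := by ring



/-- If `B = [a b]` is a reduced basis of a lattice `L` in ℝ², then
`min(‖a‖₂, ‖b‖₂, ‖a+b‖₂, ‖a-b‖₂)` equals the first successive minimum of `L`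
under the ℓ₂ norm. -/
theorem stmt5 (a1 a2 b1 b2 : ℝ)
    (hind : a1 * b2 - a2 * b1 ≠ 0)
    (hred1 : a1 * a2 * b1 * b2 ≤ 0)
    (hred2 : (|a1| - |a2|) * (|b1| - |b2|) ≤ 0) :
    IsLeast {r : ℝ | ∃ z1 z2 : ℤ, ¬(z1 = 0 ∧ z2 = 0) ∧
        r = Real.sqrt (((z1 : ℝ) * a1 + (z2 : ℝ) * b1) ^ 2
            + ((z1 : ℝ) * a2 + (z2 : ℝ) * b2) ^ 2)}
      (min (min (Real.sqrt (a1 ^ 2 + a2 ^ 2)) (Real.sqrt (b1 ^ 2 + b2 ^ 2)))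
        (min (Real.sqrt ((a1 + b1) ^ 2 + (a2 + b2) ^ 2))
          (Real.sqrt ((a1 - b1) ^ 2 + (a2 - b2) ^ 2)))) := by
  constructor
  · -- membership
    rcases min_cases (min (Real.sqrt (a1 ^ 2 + a2 ^ 2)) (Real.sqrt (b1 ^ 2 + b2 ^ 2)))
        (min (Real.sqrt ((a1 + b1) ^ 2 + (a2 + b2) ^ 2))
          (Real.sqrt ((a1 - b1) ^ 2 + (a2 - b2) ^ 2))) with ⟨h, _⟩ | ⟨h, _⟩ <;>
      rw [h]
    · rcases min_cases (Real.sqrt (a1 ^ 2 + a2 ^ 2)) (Real.sqrt (b1 ^ 2 + b2 ^ 2)) with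
        ⟨h2, _⟩ | ⟨h2, _⟩ <;> rw [h2]
      · exact ⟨1, 0, by norm_num, by norm_num⟩
      · exact ⟨0, 1, by norm_num, by norm_num⟩
    · rcases min_cases (Real.sqrt ((a1 + b1) ^ 2 + (a2 + b2) ^ 2))
          (Real.sqrt ((a1 - b1) ^ 2 + (a2 - b2) ^ 2)) with
        ⟨h2, _⟩ | ⟨h2, _⟩ <;> rw [h2]
      · exact ⟨1, 1, by norm_num, by congr 1 <;> push_cast <;> ring⟩
      · exact ⟨1, -1, by norm_num, by congr 1 <;> push_cast <;> ring⟩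
  · -- lower bound
    rintro r ⟨z1, z2, hz, rfl⟩
    set Q : ℝ := ((z1 : ℝ) * a1 + (z2 : ℝ) * b1) ^ 2 + ((z1 : ℝ) * a2 + (z2 : ℝ) * b2) ^ 2
      with hQ
    have key : a1 ^ 2 + a2 ^ 2 ≤ Q ∨ b1 ^ 2 + b2 ^ 2 ≤ Q ∨
        (a1 + b1) ^ 2 + (a2 + b2) ^ 2 ≤ Q ∨ (a1 - b1) ^ 2 + (a2 - b2) ^ 2 ≤ Q := by
      rcases eq_or_ne z1 0 with h1 | h1
      · -- z1 = 0, z2 ≠ 0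
        have h2 : z2 ≠ 0 := by tauto
        have h2' : (1 : ℝ) ≤ |(z2 : ℝ)| := by
          rw [← Int.cast_abs]; exact_mod_cast Int.one_le_abs h2
        refine Or.inr (Or.inl ?_)
        subst h1
        have : (1 : ℝ) ≤ (z2 : ℝ) ^ 2 := by nlinarith [sq_abs ((z2 : ℝ))]
        simp only [hQ]
        push_cast
        nlinarith [sq_nonneg b1, sq_nonneg b2]
      rcases eq_or_ne z2 0 with h2 | h2
      · have h1' : (1 : ℝ) ≤ |(z1 : ℝ)| := by
          rw [← Int.cast_abs]; exact_mod_cast Int.one_le_abs h1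
        refine Or.inl ?_
        subst h2
        have : (1 : ℝ) ≤ (z1 : ℝ) ^ 2 := by nlinarith [sq_abs ((z1 : ℝ))]
        simp only [hQ]
        push_cast
        nlinarith [sq_nonneg a1, sq_nonneg a2]
      -- both nonzero
      have h1' : (1 : ℝ) ≤ |(z1 : ℝ)| := by
        rw [← Int.cast_abs]; exact_mod_cast Int.one_le_abs h1
      have h2' : (1 : ℝ) ≤ |(z2 : ℝ)| := by
        rw [← Int.cast_abs]; exact_mod_cast Int.one_le_abs h2
      rcases eq_or_ne z2 z1 with he | he
      · refine Or.inr (Or.inr (Or.inl ?_))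
        subst he
        have : (1 : ℝ) ≤ (z2 : ℝ) ^ 2 := by nlinarith [sq_abs ((z2 : ℝ))]
        simp only [hQ]
        nlinarith [sq_nonneg ((a1 + b1)), sq_nonneg ((a2 + b2))]
      rcases eq_or_ne z2 (-z1) with hne | hne
      · refine Or.inr (Or.inr (Or.inr ?_))
        subst hne
        have : (1 : ℝ) ≤ (z1 : ℝ) ^ 2 := by nlinarith [sq_abs ((z1 : ℝ))]
        simp only [hQ]
        push_cast
        nlinarith [sq_nonneg ((a1 - b1)), sq_nonneg ((a2 - b2))]
      -- |z1| ≠ |z2|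
      have habs : |z1| ≠ |z2| := by
        intro hcon
        rcases abs_eq_abs.mp hcon with h | h <;> omega
      rcases lt_or_gt_of_ne habs.symm with hlt | hlt
      · -- |z2| < |z1|
        have hu : |(z2 : ℝ)| + 1 ≤ |(z1 : ℝ)| := by
          rw [← Int.cast_abs, ← Int.cast_abs]
          exact_mod_cast Int.add_one_le_iff.mpr hlt
        have h := key2 a1 a2 b1 b2 (z1 : ℝ) (z2 : ℝ) hred1 hred2 h2' hu
        rcases le_total (a1 ^ 2 + a2 ^ 2) (b1 ^ 2 + b2 ^ 2) with hm | hm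
        · rw [min_eq_left hm] at h; exact Or.inl h
        · rw [min_eq_right hm] at h; exact Or.inr (Or.inl h)
      · -- |z1| < |z2|
        have hu : |(z1 : ℝ)| + 1 ≤ |(z2 : ℝ)| := by
          rw [← Int.cast_abs, ← Int.cast_abs]
          exact_mod_cast Int.add_one_le_iff.mpr hlt
        have h := key2 b1 b2 a1 a2 (z2 : ℝ) (z1 : ℝ)
          (by linear_combination hred1)
          (by linear_combination hred2) h1' hu
        have e : ((z2 : ℝ) * b1 + (z1 : ℝ) * a1) ^ 2 + ((z2 : ℝ) * b2 + (z1 : ℝ) * a2) ^ 2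
            = Q := by rw [hQ]; ring
        rw [e] at h
        rcases le_total (b1 ^ 2 + b2 ^ 2) (a1 ^ 2 + a2 ^ 2) with hm | hm
        · rw [min_eq_left hm] at h; exact Or.inr (Or.inl h)
        · rw [min_eq_right hm] at h; exact Or.inl h
    have hQ0 : 0 ≤ Q := by positivity
    rcases key with h | h | h | h
    · exact le_trans (le_trans (min_le_left _ _) (min_le_left _ _)) (Real.sqrt_le_sqrt h)
    · exact le_trans (le_trans (min_le_left _ _) (min_le_right _ _)) (Real.sqrt_le_sqrt h)
    · exact le_trans (le_trans (min_le_right _ _) (min_le_left _ _)) (Real.sqrt_le_sqrt h)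
    · exact le_trans (le_trans (min_le_right _ _) (min_le_right _ _)) (Real.sqrt_le_sqrt h)
end

section
/- If u, v are vectors in ℝ² with ‖u‖₂ ≤ ‖v‖₂, ‖v‖₂ ≤ ‖u+v‖₂, and ‖v‖₂ ≤ ‖u-v‖₂ (i.e., [u v] is Lagrange-reduced), and u, v are linearly independent, then every nonzero vector of the lattice generated by u and v has ℓ₂ norm at least ‖u‖₂, and every lattice vector linearly independent from u has ℓ₂ norm at least ‖v‖₂. -/
open scoped RealInnerProductSpace

lemma key_int_ineq (m n : ℤ) (a b p : ℝ) (ha : 0 < a) (hab : a ≤ b)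
    (h1 : -a ≤ 2*p) (h2 : 2*p ≤ a) (hn : n ≠ 0) :
    b ≤ (m:ℝ)^2*a + 2*(m:ℝ)*(n:ℝ)*p + (n:ℝ)^2*b := by
  have hn1 : (1:ℝ) ≤ (n:ℝ)^2 := by
    have : (1:ℤ) ≤ n^2 := by nlinarith [Int.one_le_abs hn, sq_abs n]
    exact_mod_cast this
  rcases eq_or_ne m 0 with rfl | hm
  · push_cast; nlinarith
  · have hm1 : (1:ℝ) ≤ |(m:ℝ)| * |(n:ℝ)| := by
      have : (1:ℤ) ≤ |m| * |n| :=
        one_le_mul_of_one_le_of_one_le (Int.one_le_abs hm) (Int.one_le_abs hn)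
      calc (1:ℝ) ≤ ((|m| * |n| : ℤ) : ℝ) := by exact_mod_cast this
        _ = |(m:ℝ)| * |(n:ℝ)| := by push_cast; ring
    have habs : -(|(m:ℝ)| * |(n:ℝ)| * a) ≤ 2*(m:ℝ)*(n:ℝ)*p := by
      have h3 : |2*(m:ℝ)*(n:ℝ)*p| ≤ |(m:ℝ)| * |(n:ℝ)| * a := by
        have : |2*(m:ℝ)*(n:ℝ)*p| = |(m:ℝ)| * |(n:ℝ)| * |2*p| := by
          rw [show 2*(m:ℝ)*(n:ℝ)*p = (m:ℝ)*((n:ℝ)*(2*p)) by ring,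
            abs_mul, abs_mul]; ring
        rw [this]
        have h2p : |2*p| ≤ a := abs_le.2 ⟨h1, h2⟩
        have : 0 ≤ |(m:ℝ)| * |(n:ℝ)| := by positivity
        nlinarith [abs_nonneg (2*p)]
      linarith [neg_abs_le (2*(m:ℝ)*(n:ℝ)*p)]
    nlinarith [sq_abs (m:ℝ), sq_abs (n:ℝ), sq_nonneg (|(m:ℝ)| - |(n:ℝ)|),
      mul_le_mul_of_nonneg_left hm1 ha.le]

/-- If `[u v]` is Lagrange-reduced (`‖u‖ ≤ ‖v‖ ≤ ‖u+v‖, ‖u-v‖`) and `u, v`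
are linearly independent in ℝ², then every nonzero lattice vector has ℓ₂ norm
at least `‖u‖`, and every lattice vector linearly independent from `u`
(i.e. with nonzero coefficient on `v`) has ℓ₂ norm at least `‖v‖`. -/
theorem stmt6 (u v : EuclideanSpace ℝ (Fin 2))
    (hind : LinearIndependent ℝ ![u, v])
    (huv : ‖u‖ ≤ ‖v‖) (hp : ‖v‖ ≤ ‖u + v‖) (hm : ‖v‖ ≤ ‖u - v‖) :
    (∀ z1 z2 : ℤ, ¬(z1 = 0 ∧ z2 = 0) →
        ‖(z1 : ℝ) • u + (z2 : ℝ) • v‖ ≥ ‖u‖) ∧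
    (∀ z1 z2 : ℤ, z2 ≠ 0 → ‖(z1 : ℝ) • u + (z2 : ℝ) • v‖ ≥ ‖v‖) := by
  have hu0 : u ≠ 0 := by
    have := hind.ne_zero 0
    simpa using this
  have ha : 0 < ‖u‖^2 := pow_pos (norm_pos_iff.mpr hu0) 2
  have hab : ‖u‖^2 ≤ ‖v‖^2 := by nlinarith [norm_nonneg u, norm_nonneg v]
  have hpsq : ‖v‖^2 ≤ ‖u+v‖^2 := by nlinarith [norm_nonneg v, norm_nonneg (u+v)]
  have hmsq : ‖v‖^2 ≤ ‖u-v‖^2 := by nlinarith [norm_nonneg v, norm_nonneg (u-v)]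
  rw [norm_add_sq_real] at hpsq
  rw [norm_sub_sq_real] at hmsq
  have h1 : -(‖u‖^2) ≤ 2 * ⟪u, v⟫ := by linarith
  have h2 : 2 * ⟪u, v⟫ ≤ ‖u‖^2 := by linarith
  have hexp : ∀ z1 z2 : ℤ, ‖(z1 : ℝ) • u + (z2 : ℝ) • v‖^2
      = (z1:ℝ)^2*‖u‖^2 + 2*(z1:ℝ)*(z2:ℝ)*⟪u, v⟫ + (z2:ℝ)^2*‖v‖^2 := by
    intro z1 z2
    rw [norm_add_sq_real, norm_smul, norm_smul, real_inner_smul_left,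
      real_inner_smul_right]
    simp [mul_pow, sq_abs]
    ring
  have part2 : ∀ z1 z2 : ℤ, z2 ≠ 0 → ‖(z1 : ℝ) • u + (z2 : ℝ) • v‖ ≥ ‖v‖ := by
    intro z1 z2 hz2
    have hk := key_int_ineq z1 z2 (‖u‖^2) (‖v‖^2) ⟪u, v⟫ ha hab h1 h2 hz2
    rw [← hexp] at hk
    nlinarith [norm_nonneg v, norm_nonneg ((z1 : ℝ) • u + (z2 : ℝ) • v)]
  refine ⟨?_, part2⟩
  intro z1 z2 hz
  rcases eq_or_ne z2 0 with rfl | hz2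
  · have hz1 : z1 ≠ 0 := by tauto
    have h1z : (1:ℝ) ≤ |(z1:ℝ)| := by
      have := Int.one_le_abs hz1
      calc (1:ℝ) ≤ ((|z1| : ℤ) : ℝ) := by exact_mod_cast this
        _ = |(z1:ℝ)| := by push_cast; rfl
    simp only [Int.cast_zero, zero_smul, add_zero, ge_iff_le, norm_smul,
      Real.norm_eq_abs]
    nlinarith [norm_nonneg u]
  · exact le_trans huv (part2 z1 z2 hz2)
end

section
/- Let a = (a1,a2), b = (b1,b2) ∈ ℝ² be a reduced basis (a1*a2*b1*b2 ≤ 0, (|a1|-|a2|)(|b1|-|b2|) ≤ 0) with a1*b1 ≥ 0, a2*b2 ≤ 0, ‖a‖∞ ≤ ‖b‖∞, and a1, a2 not both zero. Define f(x) = max(|b1 - x·a1|, |b2 - x·a2|) for real x. Then the minimum of f over ℝ is attained at x* = (|b1| - |b2|)/(|a1| + |a2|), and the minimum of f over ℤ is attained at ⌊x*⌋ or ⌈x*⌉. -/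
/-- Let `a = (a1,a2)`, `b = (b1,b2)` be a reduced basis with `a1*b1 ≥ 0`,
`a2*b2 ≤ 0`, `‖a‖∞ ≤ ‖b‖∞` and `a ≠ 0`. Define
`f x = max |b1 - x*a1| |b2 - x*a2|`. Then the minimum of `f` over `ℝ` is
attained at `x* = (|b1| - |b2|)/(|a1| + |a2|)`, and the minimum of `f` over
`ℤ` is attained at `⌊x*⌋` or `⌈x*⌉`. -/
theorem stmt17 (a1 a2 b1 b2 : ℝ)
    (ha : ¬(a1 = 0 ∧ a2 = 0))
    (hred1 : a1 * a2 * b1 * b2 ≤ 0)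
    (hred2 : (|a1| - |a2|) * (|b1| - |b2|) ≤ 0)
    (h1 : a1 * b1 ≥ 0) (h2 : a2 * b2 ≤ 0)
    (hn : max |a1| |a2| ≤ max |b1| |b2|) :
    (∀ x : ℝ,
        max |b1 - (|b1| - |b2|) / (|a1| + |a2|) * a1|
            |b2 - (|b1| - |b2|) / (|a1| + |a2|) * a2|
          ≤ max |b1 - x * a1| |b2 - x * a2|) ∧
    (∃ z : ℤ, (z = ⌊(|b1| - |b2|) / (|a1| + |a2|)⌋ ∨
        z = ⌈(|b1| - |b2|) / (|a1| + |a2|)⌉) ∧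
      ∀ m : ℤ, max |b1 - (z : ℝ) * a1| |b2 - (z : ℝ) * a2|
          ≤ max |b1 - (m : ℝ) * a1| |b2 - (m : ℝ) * a2|) := by
  have hs : 0 < |a1| + |a2| := by
    rcases not_and_or.mp ha with h | h
    · have := abs_pos.mpr h; linarith [abs_nonneg a2]
    · have := abs_pos.mpr h; linarith [abs_nonneg a1]
  set s : ℝ := |a1| + |a2| with hsdef
  set xs : ℝ := (|b1| - |b2|) / s with hxs
  have hxs' : xs * s = |b1| - |b2| := div_mul_cancel₀ _ hs.ne'
  have h1' : |a1| * |b1| = a1 * b1 := by rw [← abs_mul]; exact abs_of_nonneg h1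
  have h2' : |a2| * |b2| = -(a2 * b2) := by rw [← abs_mul]; exact abs_of_nonpos h2
  have e1 : b1 * |a1| = a1 * |b1| := by
    have hsq : (b1 * |a1| - a1 * |b1|) ^ 2 = 0 := by
      linear_combination b1 ^ 2 * (sq_abs a1) + a1 ^ 2 * (sq_abs b1) - 2 * a1 * b1 * h1'
    have := pow_eq_zero_iff (two_ne_zero) |>.mp hsq
    linarith [sub_eq_zero.mp this]
  have e2 : a2 * |b2| = -(b2 * |a2|) := by
    have hsq : (a2 * |b2| + b2 * |a2|) ^ 2 = 0 := by
      linear_combination b2 ^ 2 * (sq_abs a2) + a2 ^ 2 * (sq_abs b2) + 2 * a2 * b2 * h2'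
    have := pow_eq_zero_iff (two_ne_zero) |>.mp hsq
    linarith
  have key1 : (b1 - xs * a1) * s = b1 * |a2| + a1 * |b2| := by
    linear_combination (-a1) * hxs' + b1 * hsdef + e1
  have key2 : (b2 - xs * a2) * s = b2 * |a1| - a2 * |b1| := by
    linear_combination (-a2) * hxs' + b2 * hsdef + e2
  have N1sq : (b1 * |a2| + a1 * |b2|) ^ 2 = (a1 * b2 - a2 * b1) ^ 2 := by
    linear_combination b1 ^ 2 * (sq_abs a2) + a1 ^ 2 * (sq_abs b2) + 2 * a1 * b1 * h2'
  have N2sq : (b2 * |a1| - a2 * |b1|) ^ 2 = (a1 * b2 - a2 * b1) ^ 2 := by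
    linear_combination b2 ^ 2 * (sq_abs a1) + a2 ^ 2 * (sq_abs b1) - 2 * a2 * b2 * h1'
  have hA : |b1 - xs * a1| = |a1 * b2 - a2 * b1| / s := by
    have h := (eq_div_iff hs.ne').mpr key1
    rw [h, abs_div, abs_of_pos hs]
    congr 1
    rw [← Real.sqrt_sq_eq_abs (b1 * |a2| + a1 * |b2|), ← Real.sqrt_sq_eq_abs (a1 * b2 - a2 * b1), N1sq]
  have hB : |b2 - xs * a2| = |a1 * b2 - a2 * b1| / s := by
    have h := (eq_div_iff hs.ne').mpr key2
    rw [h, abs_div, abs_of_pos hs]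
    congr 1
    rw [← Real.sqrt_sq_eq_abs (b2 * |a1| - a2 * |b1|), ← Real.sqrt_sq_eq_abs (a1 * b2 - a2 * b1), N2sq]
  have lb : ∀ x : ℝ, |a1 * b2 - a2 * b1| / s ≤ max |b1 - x * a1| |b2 - x * a2| := by
    intro x
    rw [div_le_iff₀ hs]
    have tri : |a1 * b2 - a2 * b1| ≤ |a1| * |b2 - x * a2| + |a2| * |b1 - x * a1| := by
      calc |a1 * b2 - a2 * b1| = |a1 * (b2 - x * a2) - a2 * (b1 - x * a1)| := by
            congr 1; ring
        _ ≤ |a1 * (b2 - x * a2)| + |a2 * (b1 - x * a1)| := abs_sub _ _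
        _ = |a1| * |b2 - x * a2| + |a2| * |b1 - x * a1| := by rw [abs_mul, abs_mul]
    have m1 : |b1 - x * a1| ≤ max |b1 - x * a1| |b2 - x * a2| := le_max_left _ _
    have m2 : |b2 - x * a2| ≤ max |b1 - x * a1| |b2 - x * a2| := le_max_right _ _
    have expand : (max |b1 - x * a1| |b2 - x * a2|) * s
        = |a1| * max |b1 - x * a1| |b2 - x * a2| + |a2| * max |b1 - x * a1| |b2 - x * a2| := by
      rw [hsdef]; ring
    linarith [mul_le_mul_of_nonneg_left m1 (abs_nonneg a2),
      mul_le_mul_of_nonneg_left m2 (abs_nonneg a1), tri, expand]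
  have part1 : ∀ x : ℝ, max |b1 - xs * a1| |b2 - xs * a2|
      ≤ max |b1 - x * a1| |b2 - x * a2| := by
    intro x
    rw [hA, hB, max_self]
    exact lb x
  refine ⟨part1, ?_⟩
  have mono : ∀ x y : ℝ, ((x ≤ y ∧ y ≤ xs) ∨ (xs ≤ y ∧ y ≤ x)) →
      max |b1 - y * a1| |b2 - y * a2| ≤ max |b1 - x * a1| |b2 - x * a2| := by
    intro x y hcase
    by_cases hx : x = xs
    · have hy : y = x := by
        rcases hcase with ⟨h, h'⟩ | ⟨h, h'⟩ <;> subst hx <;> linarith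
      rw [hy]
    · have hxne : x - xs ≠ 0 := sub_ne_zero.mpr hx
      set t : ℝ := (y - xs) / (x - xs) with ht
      have htb : 0 ≤ t ∧ t ≤ 1 := by
        rcases hcase with ⟨h, h'⟩ | ⟨h, h'⟩
        · have hlt : x < xs := lt_of_le_of_ne (le_trans h h') hx
          have halt : t = (xs - y) / (xs - x) := by
            rw [ht, ← neg_sub y xs, ← neg_sub x xs, neg_div_neg_eq]
          constructor
          · rw [halt]; exact div_nonneg (by linarith) (by linarith)
          · rw [halt, div_le_one (by linarith)]; linarith
        · have hlt : xs < x := lt_of_le_of_ne (le_trans h h') (Ne.symm hx)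
          constructor
          · rw [ht]; exact div_nonneg (by linarith) (by linarith)
          · rw [ht, div_le_one (by linarith)]; linarith
      obtain ⟨ht0, ht1⟩ := htb
      have hy : y = t * x + (1 - t) * xs := by
        rw [ht]; field_simp; ring
      have habs : ∀ c d : ℝ, |d - y * c| ≤ t * |d - x * c| + (1 - t) * |d - xs * c| := by
        intro c d
        have hd : d - y * c = t * (d - x * c) + (1 - t) * (d - xs * c) := by
          rw [hy]; ring
        rw [hd]
        refine (abs_add_le _ _).trans ?_
        rw [abs_mul, abs_mul, abs_of_nonneg ht0, abs_of_nonneg (by linarith : (0:ℝ) ≤ 1 - t)]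
      have step : ∀ A B M : ℝ, A ≤ M → B ≤ M → t * A + (1 - t) * B ≤ M := by
        intro A B M hAm hBm
        nlinarith
      apply max_le
      · refine (habs a1 b1).trans (step _ _ _ (le_max_left _ _)
          (le_trans (le_max_left _ _) (part1 x)))
      · refine (habs a2 b2).trans (step _ _ _ (le_max_right _ _)
          (le_trans (le_max_right _ _) (part1 x)))
  have hF : ((⌊xs⌋ : ℤ) : ℝ) ≤ xs := Int.floor_le xs
  have hC : xs ≤ ((⌈xs⌉ : ℤ) : ℝ) := Int.le_ceil xs
  have hCF : ((⌈xs⌉ : ℤ) : ℝ) ≤ ((⌊xs⌋ : ℤ) : ℝ) + 1 := by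
    exact_mod_cast Int.ceil_le_floor_add_one xs
  by_cases hfc : max |b1 - ((⌊xs⌋ : ℤ) : ℝ) * a1| |b2 - ((⌊xs⌋ : ℤ) : ℝ) * a2|
      ≤ max |b1 - ((⌈xs⌉ : ℤ) : ℝ) * a1| |b2 - ((⌈xs⌉ : ℤ) : ℝ) * a2|
  · refine ⟨⌊xs⌋, Or.inl rfl, fun m => ?_⟩
    rcases le_or_gt m ⌊xs⌋ with hm | hm
    · exact mono m ⌊xs⌋ (Or.inl ⟨by exact_mod_cast hm, hF⟩)
    · have hm' : ((⌈xs⌉ : ℤ) : ℝ) ≤ (m : ℝ) := by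
        have : (⌊xs⌋ : ℤ) + 1 ≤ m := hm
        have : ((⌊xs⌋ : ℤ) : ℝ) + 1 ≤ (m : ℝ) := by exact_mod_cast this
        linarith
      exact le_trans hfc (mono m ⌈xs⌉ (Or.inr ⟨hC, hm'⟩))
  · push_neg at hfc
    refine ⟨⌈xs⌉, Or.inr rfl, fun m => ?_⟩
    rcases le_or_gt m ⌊xs⌋ with hm | hm
    · exact le_trans hfc.le (mono m ⌊xs⌋ (Or.inl ⟨by exact_mod_cast hm, hF⟩))
    · have hm' : ((⌈xs⌉ : ℤ) : ℝ) ≤ (m : ℝ) := by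
        have : (⌊xs⌋ : ℤ) + 1 ≤ m := hm
        have : ((⌊xs⌋ : ℤ) : ℝ) + 1 ≤ (m : ℝ) := by exact_mod_cast this
        linarith
      exact mono m ⌈xs⌉ (Or.inr ⟨hC, hm'⟩)
end

section
/- Let a = (a1,a2), b = (b1,b2) ∈ ℝ² with a1*b1 > 0, a2*b2 > 0, |a1| ≥ |a2|, and let q1 = ⌊a1/b1⌋₀, q2 = ⌊a2/b2⌋₀ with q1 > q2. Define a' = b and b' = a - q1·b = (b1', b2'). Then sign(b1') = sign(b1) (or b1' = 0), sign(b2') ≠ sign(b2) (or b2' = 0), and hence a1'·a2'·b1'·b2' ≤ 0. -/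
/-- Rounding toward zero. -/
noncomputable def rtz (x : ℝ) : ℤ := if 0 ≤ x then ⌊x⌋ else ⌈x⌉

/-!
Both quotients `r₁ = a1 / b1` and `r₂ = a2 / b2` are positive, so `q₁ = ⌊r₁⌋` and `q₂ = ⌊r₂⌋`.
Writing `b1' = b1 (r₁ - q₁)` and `b2' = b2 (r₂ - q₁)`, the first factor `r₁ - q₁ = fract r₁` is
nonnegative, while `r₂ < q₂ + 1 ≤ q₁` makes the second negative. So `b1'` is a nonnegative and `b2'` a
negative multiple of the corresponding coordinate of `b`, and
`b1 b2 b1' b2' = (b1² (r₁ - q₁)) (b2² (r₂ - q₁)) ≤ 0`.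
-/

lemma rtz_of_nonneg {x : ℝ} (hx : 0 ≤ x) : rtz x = ⌊x⌋ := if_pos hx

lemma div_pos_of_mul_pos {a b : ℝ} (h : 0 < a * b) : 0 < a / b :=
  div_pos_iff.mpr (mul_pos_iff.mp h)

lemma sub_mul_eq_mul_div_sub {a b : ℝ} (hb : b ≠ 0) (q : ℝ) : a - q * b = b * (a / b - q) := by
  field_simp

lemma eq_zero_or_sign_mul_eq_of_nonneg (b : ℝ) {s : ℝ} (hs : 0 ≤ s) :
    b * s = 0 ∨ Real.sign (b * s) = Real.sign b := by
  rcases hs.eq_or_lt with rfl | hs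
  · exact Or.inl (mul_zero b)
  · right
    rcases lt_trichotomy b 0 with hb | rfl | hb
    · rw [Real.sign_of_neg (mul_neg_of_neg_of_pos hb hs), Real.sign_of_neg hb]
    · rw [zero_mul]
    · rw [Real.sign_of_pos (mul_pos hb hs), Real.sign_of_pos hb]

lemma sign_mul_ne_of_neg {b t : ℝ} (hb : b ≠ 0) (ht : t < 0) :
    Real.sign (b * t) ≠ Real.sign b := by
  rcases hb.lt_or_gt with hb | hb
  · rw [Real.sign_of_pos (mul_pos_of_neg_of_neg hb ht), Real.sign_of_neg hb]
    norm_num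
  · rw [Real.sign_of_neg (mul_neg_of_pos_of_neg hb ht), Real.sign_of_pos hb]
    norm_num

lemma mul_mul_mul_mul_nonpos (b1 b2 : ℝ) {s t : ℝ} (hs : 0 ≤ s) (ht : t ≤ 0) :
    b1 * b2 * (b1 * s) * (b2 * t) ≤ 0 := by
  have hrw : b1 * b2 * (b1 * s) * (b2 * t) = (b1 ^ 2 * s) * (b2 ^ 2 * t) := by ring
  rw [hrw]
  exact mul_nonpos_of_nonneg_of_nonpos (by positivity) (mul_nonpos_of_nonneg_of_nonpos (sq_nonneg b2) ht)

theorem stmt19_general (a1 a2 b1 b2 : ℝ)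
    (h1 : a1 * b1 > 0) (h2 : a2 * b2 > 0)
    (q1 q2 : ℤ) (hq1 : q1 = rtz (a1 / b1)) (hq2 : q2 = rtz (a2 / b2))
    (hqq : q1 > q2)
    (b1' b2' : ℝ) (hb1' : b1' = a1 - (q1 : ℝ) * b1) (hb2' : b2' = a2 - (q1 : ℝ) * b2) :
    (b1' = 0 ∨ Real.sign b1' = Real.sign b1) ∧
    (b2' = 0 ∨ Real.sign b2' ≠ Real.sign b2) ∧
    b1 * b2 * b1' * b2' ≤ 0 := by
  have hb1 : b1 ≠ 0 := right_ne_zero_of_mul h1.ne'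
  have hb2 : b2 ≠ 0 := right_ne_zero_of_mul h2.ne'
  rw [rtz_of_nonneg (div_pos_of_mul_pos h1).le] at hq1
  rw [rtz_of_nonneg (div_pos_of_mul_pos h2).le] at hq2
  have hr1 : 0 ≤ a1 / b1 - q1 := by
    rw [hq1]
    exact Int.fract_nonneg _
  have hr2 : a2 / b2 - q1 < 0 := sub_neg.mpr (Int.floor_lt.mp (hq2 ▸ hqq))
  rw [sub_mul_eq_mul_div_sub hb1] at hb1'
  rw [sub_mul_eq_mul_div_sub hb2] at hb2'
  subst hb1' hb2'
  exact ⟨eq_zero_or_sign_mul_eq_of_nonneg b1 hr1, Or.inr (sign_mul_ne_of_neg hb2 hr2),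
    mul_mul_mul_mul_nonpos b1 b2 hr1 hr2.le⟩

/-- Let `a = (a1,a2)`, `b = (b1,b2)` with `a1*b1 > 0`, `a2*b2 > 0`,
`|a1| ≥ |a2|`, and rounded-toward-zero quotients `q1 = ⌊a1/b1⌋₀ > q2 = ⌊a2/b2⌋₀`.
Define `a' = b` and `b' = a - q1•b = (b1', b2')`. Then `sign b1' = sign b1`
(or `b1' = 0`), `sign b2' ≠ sign b2` (or `b2' = 0`), and hence
`a1'*a2'*b1'*b2' ≤ 0`. -/
theorem stmt19 (a1 a2 b1 b2 : ℝ)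
    (h1 : a1 * b1 > 0) (h2 : a2 * b2 > 0)
    (ha : |a1| ≥ |a2|) (hb1 : b1 ≠ 0) (hb2 : b2 ≠ 0)
    (q1 q2 : ℤ) (hq1 : q1 = rtz (a1 / b1)) (hq2 : q2 = rtz (a2 / b2))
    (hqq : q1 > q2)
    (b1' b2' : ℝ) (hb1' : b1' = a1 - (q1 : ℝ) * b1) (hb2' : b2' = a2 - (q1 : ℝ) * b2) :
    (b1' = 0 ∨ Real.sign b1' = Real.sign b1) ∧
    (b2' = 0 ∨ Real.sign b2' ≠ Real.sign b2) ∧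
    b1 * b2 * b1' * b2' ≤ 0 :=
  stmt19_general a1 a2 b1 b2 h1 h2 q1 q2 hq1 hq2 hqq b1' b2' hb1' hb2'
end
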